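/- Let V be a finite-dimensional real vector space and Q a nondegenerate quadratic form on V. Let M be a finite-dimensional Cℓ(Q)-module and h a nondegenerate bilinear form on M. If S₊, S₋ ⊆ M are linear subspaces with 2·(dim S₊ + dim S₋) > 3·dim M, then the only vector v ∈ V satisfying h(γ_v s, t) = 0 for all s ∈ S₊ and t ∈ S₋ is v = 0. (This is the algebraic core of Theorem 2.1 (iv): if k₊ + k₋ > (3/2)N for the spaces spanned by Killing spinors with Killing numbers ±λ, then the bracket map onto the tangent space is surjective.) -/

import Mathlib

/-- The Clifford multiplication `γ_v : s ↦ ι(v) • s` as an `ℝ`-linear endomorphism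
of a `Cℓ(Q)`-module `M`. -/
noncomputable def gammaLin {V : Type*} [AddCommGroup V] [Module ℝ V]
    (Q : QuadraticForm ℝ V) {M : Type*} [AddCommGroup M] [Module ℝ M]
    [Module (CliffordAlgebra Q) M] [IsScalarTower ℝ (CliffordAlgebra Q) M]
    (v : V) : M →ₗ[ℝ] M where
  toFun s := CliffordAlgebra.ι Q v • s
  map_add' s t := smul_add _ s t
  map_smul' r s := (smul_comm r (CliffordAlgebra.ι Q v) s).symm

/-!
If `v ≠ 0`, then `γ_v` has kernel of dimension at most `N/2`, `N = dim M`: when `Q v ≠ 0`,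
`γ_v² = Q(v)` makes `γ_v` invertible, and when `Q v = 0`, choosing `w` with `polar Q(v, w) ≠ 0`,
the anticommutation relation `γ_v γ_w + γ_w γ_v = polar Q(v, w)` shows `ker γ_v = im γ_v`.
Hence `dim γ_v S₊ ≥ dim S₊ - N/2`. If `h(γ_v S₊, S₋) = 0`, nondegeneracy of `h` gives
`dim γ_v S₊ + dim S₋ ≤ N`, so `dim S₊ + dim S₋ ≤ 3N/2`.
-/

open Module LinearMap

section LinearAlgebra

variable {K M : Type*} [Field K] [AddCommGroup M] [Module K M] [FiniteDimensional K M]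

lemma LinearMap.BilinForm.finrank_add_finrank_le_of_forall_eq_zero {B : LinearMap.BilinForm K M}
    (hB : B.Nondegenerate) {S T : Submodule K M} (hST : ∀ s ∈ S, ∀ t ∈ T, B s t = 0) :
    finrank K S + finrank K T ≤ finrank K M := by
  have hT : finrank K T ≤ finrank K (B.orthogonal S) :=
    Submodule.finrank_mono fun t ht s hs => hST s hs t ht
  have hS := Submodule.finrank_le S
  rw [BilinForm.finrank_orthogonal hB] at hT
  omega

lemma Submodule.finrank_le_finrank_map_add_finrank_ker {N : Type*} [AddCommGroup N]
    [Module K N] (f : M →ₗ[K] N) (S : Submodule K M) :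
    finrank K S ≤ finrank K (S.map f) + finrank K (ker f) := by
  have hrank := (f.domRestrict S).finrank_range_add_finrank_ker
  rw [range_domRestrict] at hrank
  have hker : finrank K (ker (f.domRestrict S)) ≤ finrank K (ker f) := by
    rw [← Submodule.finrank_map_subtype_eq]
    refine Submodule.finrank_mono ?_
    rintro _ ⟨x, hx, rfl⟩
    simpa using hx
  omega

end LinearAlgebra

section CliffordModule

variable {V : Type*} [AddCommGroup V] [Module ℝ V] (Q : QuadraticForm ℝ V)
  {M : Type*} [AddCommGroup M] [Module ℝ M]
  [Module (CliffordAlgebra Q) M] [IsScalarTower ℝ (CliffordAlgebra Q) M]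

lemma gammaLin_apply (v : V) (s : M) : gammaLin Q v s = CliffordAlgebra.ι Q v • s := rfl

lemma gammaLin_gammaLin_self (v : V) (s : M) : gammaLin Q v (gammaLin Q v s) = Q v • s := by
  rw [gammaLin_apply, gammaLin_apply, ← mul_smul, CliffordAlgebra.ι_sq_scalar,
    algebraMap_smul]

lemma gammaLin_gammaLin_add_swap (v w : V) (s : M) :
    gammaLin Q v (gammaLin Q w s) + gammaLin Q w (gammaLin Q v s) =
      QuadraticMap.polar Q v w • s := by
  simp only [gammaLin_apply, ← mul_smul, ← add_smul, CliffordAlgebra.ι_mul_ι_add_swap,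
    algebraMap_smul]

variable {Q}

lemma ker_gammaLin_eq_bot {v : V} (hv : Q v ≠ 0) : ker (gammaLin Q v : M →ₗ[ℝ] M) = ⊥ := by
  refine (ker_eq_bot').2 fun s hs => ?_
  have hsq := gammaLin_gammaLin_self Q v s
  rw [hs, map_zero, eq_comm, smul_eq_zero] at hsq
  exact hsq.resolve_left hv

lemma ker_gammaLin_eq_range {v w : V} (hv : Q v = 0) (hvw : QuadraticMap.polar Q v w ≠ 0) :
    ker (gammaLin Q v : M →ₗ[ℝ] M) = range (gammaLin Q v) := by
  refine le_antisymm (fun s hs => ?_) ?_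
  · have hanti := gammaLin_gammaLin_add_swap Q v w s
    rw [show gammaLin Q v s = 0 from hs, map_zero, add_zero] at hanti
    refine ⟨(QuadraticMap.polar Q v w)⁻¹ • gammaLin Q w s, ?_⟩
    rw [map_smul, hanti, smul_smul, inv_mul_cancel₀ hvw, one_smul]
  · rintro _ ⟨s, rfl⟩
    rw [mem_ker, gammaLin_gammaLin_self, hv, zero_smul]

lemma two_mul_finrank_ker_gammaLin_le [FiniteDimensional ℝ M]
    (hQ : (QuadraticMap.polarBilin Q).Nondegenerate) {v : V} (hv : v ≠ 0) :
    2 * finrank ℝ (ker (gammaLin Q v : M →ₗ[ℝ] M)) ≤ finrank ℝ M := by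
  have hrank := (gammaLin Q v : M →ₗ[ℝ] M).finrank_range_add_finrank_ker
  by_cases hQv : Q v = 0
  · obtain ⟨w, hvw⟩ : ∃ w, QuadraticMap.polar Q v w ≠ 0 := by
      by_contra! hcon
      exact hv (hQ.1 v hcon)
    rw [← ker_gammaLin_eq_range hQv hvw] at hrank
    omega
  · rw [ker_gammaLin_eq_bot hQv, finrank_bot]
    omega

end CliffordModule

theorem killing_spinors_two_numbers_general
    {V : Type*} [AddCommGroup V] [Module ℝ V]
    (Q : QuadraticForm ℝ V) (hQ : (QuadraticMap.polarBilin Q).Nondegenerate)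
    {M : Type*} [AddCommGroup M] [Module ℝ M] [FiniteDimensional ℝ M]
    [Module (CliffordAlgebra Q) M] [IsScalarTower ℝ (CliffordAlgebra Q) M]
    (h : LinearMap.BilinForm ℝ M) (hh : h.Nondegenerate)
    (Splus Sminus : Submodule ℝ M)
    (hdim : 3 * Module.finrank ℝ M <
      2 * (Module.finrank ℝ Splus + Module.finrank ℝ Sminus))
    (v : V)
    (hv : ∀ s ∈ Splus, ∀ t ∈ Sminus, h (gammaLin Q v s) t = 0) :
    v = 0 := by
  by_contra hv0
  have horth := BilinForm.finrank_add_finrank_le_of_forall_eq_zero hh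
    (S := Splus.map (gammaLin Q v)) (T := Sminus) (by rintro _ ⟨s, hs, rfl⟩; exact hv s hs)
  have himage := Splus.finrank_le_finrank_map_add_finrank_ker (gammaLin Q v)
  have hker := two_mul_finrank_ker_gammaLin_le hQ hv0 (M := M)
  omega

/-- For a nondegenerate quadratic form `Q`, if `S₊, S₋` are subspaces of a Clifford
module `M` with `dim S₊ + dim S₋ > (3/2) dim M` and `h` is a nondegenerate bilinear
form on `M`, then the only vector `v` with `h(γ_v S₊, S₋) = 0` is `v = 0`. -/
theorem killing_spinors_two_numbers
    {V : Type*} [AddCommGroup V] [Module ℝ V] [FiniteDimensional ℝ V]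
    (Q : QuadraticForm ℝ V) (hQ : (QuadraticMap.polarBilin Q).Nondegenerate)
    {M : Type*} [AddCommGroup M] [Module ℝ M] [FiniteDimensional ℝ M]
    [Module (CliffordAlgebra Q) M] [IsScalarTower ℝ (CliffordAlgebra Q) M]
    (h : LinearMap.BilinForm ℝ M) (hh : h.Nondegenerate)
    (Splus Sminus : Submodule ℝ M)
    (hdim : 3 * Module.finrank ℝ M <
      2 * (Module.finrank ℝ Splus + Module.finrank ℝ Sminus))
    (v : V)
    (hv : ∀ s ∈ Splus, ∀ t ∈ Sminus, h (gammaLin Q v s) t = 0) :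
    v = 0 :=
  killing_spinors_two_numbers_general Q hQ h hh Splus Sminus hdim v hv
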